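/- arXiv:1211.2682 — 2 statements merged into one kernel-verified Lean document; each statement's English description precedes it below -/
import Mathlib

section
/- A function nonincreasing along a trajectory is constant on the ω-limit set: let φ be a continuous flow on a metric space X (φ(0) = id, φ(s+t) = φ(s) ∘ φ(t), jointly continuous in (t,x)), let x ∈ X have precompact forward orbit {φ(t)(x) : t ≥ 0}, and let V : X → ℝ be continuous such that t ↦ V(φ(t)(x)) is antitone on [0,∞). Then the ω-limit set ω(x) = ⋂_{T ≥ 0} closure{φ(t)(x) : t ≥ T} is nonempty and compact, the limit c = lim_{t→∞} V(φ(t)(x)) exists, and V(y) = c for every y ∈ ω(x). -/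
/-!
The ω-limit set is the set of cluster points of the trajectory at `+∞`, so it is nonempty and
compact as soon as the forward orbit is precompact. Along the trajectory `V` is antitone and
bounded below (by compactness), hence converges to some `c`; for `y ∈ ω(x)`, `V y` is a cluster
point of `t ↦ V (φ t x)` by continuity, and therefore equals `c`.
-/

open Filter Topology Set

theorem isCompact_biInter_closure_image_Ici {ι X : Type*} [Preorder ι] [TopologicalSpace X]
    {f : ι → X} {a : ι} (hK : IsCompact (closure (f '' Ici a))) :
    IsCompact (⋂ (T : ι) (_ : a ≤ T), closure (f '' Ici T)) :=
  hK.of_isClosed_subset (isClosed_biInter fun _ _ => isClosed_closure) (biInter_subset_of_mem le_rfl)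

section OmegaLimit

variable {ι X : Type*} [Preorder ι] [IsDirectedOrder ι] [TopologicalSpace X] (f : ι → X) (a : ι)

theorem biInter_closure_image_Ici_eq_setOf_mapClusterPt :
    ⋂ (T : ι) (_ : a ≤ T), closure (f '' Ici T) = {y | MapClusterPt y atTop f} := by
  have : Nonempty ι := ⟨a⟩
  ext y
  simp only [mem_iInter, mem_ofPred_eq, mapClusterPt_atTop_iff_forall_mem_closure]
  refine ⟨fun hy T => ?_, fun hy T _ => hy T⟩
  obtain ⟨S, hTS, haS⟩ := exists_ge_ge T a
  exact closure_mono (image_mono (Ici_subset_Ici.mpr hTS)) (hy S haS)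

variable {f a}

theorem nonempty_biInter_closure_image_Ici (hK : IsCompact (closure (f '' Ici a))) :
    (⋂ (T : ι) (_ : a ≤ T), closure (f '' Ici T)).Nonempty := by
  have : Nonempty ι := ⟨a⟩
  rw [biInter_closure_image_Ici_eq_setOf_mapClusterPt]
  obtain ⟨y, -, hy⟩ := hK.exists_mapClusterPt_of_frequently <|
    (eventually_ge_atTop a).frequently.mono fun t ht => subset_closure (mem_image_of_mem f ht)
  exact ⟨y, hy⟩

end OmegaLimit

theorem MapClusterPt.eq_of_tendsto {α X : Type*} [TopologicalSpace X] [T2Space X] {F : Filter α}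
    {u : α → X} {x c : X} (hx : MapClusterPt x F u) (hu : Tendsto u F (𝓝 c)) : x = c :=
  eq_of_nhds_neBot (hx.clusterPt.mono hu)

theorem AntitoneOn.exists_tendsto_atTop_of_bddBelow {ι α : Type*} [Preorder ι] [IsDirectedOrder ι]
    [ConditionallyCompleteLinearOrder α] [TopologicalSpace α] [OrderTopology α] {f : ι → α} {a : ι}
    (hf : AntitoneOn f (Ici a)) (hbdd : BddBelow (f '' Ici a)) :
    ∃ c, Tendsto f atTop (𝓝 c) := by
  refine ⟨_, tendsto_comp_val_Ici_atTop.mp (tendsto_atTop_ciInf (antitoneOn_iff_antitone.mp hf) ?_)⟩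
  rwa [← image_eq_range]

theorem lyapunov_constant_on_omega_limit_general
    {X : Type*} [MetricSpace X]
    (φ : ℝ → X → X)
    (x : X)
    (hpre : IsCompact (closure ((fun t => φ t x) '' Set.Ici (0 : ℝ))))
    (V : X → ℝ) (hV : Continuous V)
    (hmono : AntitoneOn (fun t => V (φ t x)) (Set.Ici (0 : ℝ))) :
    (⋂ (T : ℝ) (_ : 0 ≤ T), closure ((fun t => φ t x) '' Set.Ici T)).Nonempty ∧
    IsCompact (⋂ (T : ℝ) (_ : 0 ≤ T), closure ((fun t => φ t x) '' Set.Ici T)) ∧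
    ∃ c : ℝ, Tendsto (fun t => V (φ t x)) atTop (𝓝 c) ∧
      ∀ y ∈ ⋂ (T : ℝ) (_ : 0 ≤ T), closure ((fun t => φ t x) '' Set.Ici T), V y = c := by
  refine ⟨nonempty_biInter_closure_image_Ici hpre, isCompact_biInter_closure_image_Ici hpre, ?_⟩
  have hbdd : BddBelow (V '' ((fun t => φ t x) '' Ici 0)) :=
    (hpre.bddBelow_image hV.continuousOn).mono (image_mono subset_closure)
  obtain ⟨c, hc⟩ := hmono.exists_tendsto_atTop_of_bddBelow (by rwa [image_image] at hbdd)
  refine ⟨c, hc, fun y hy => ?_⟩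
  rw [biInter_closure_image_Ici_eq_setOf_mapClusterPt] at hy
  exact (hy.continuousAt_comp hV.continuousAt).eq_of_tendsto hc

/-- A function nonincreasing along a trajectory is constant on the ω-limit set: for
a continuous flow `φ` on a metric space `X`, a point `x` with precompact forward
orbit, and a continuous `V : X → ℝ` with `t ↦ V(φ t x)` antitone on `[0,∞)`, the
ω-limit set `ω(x) = ⋂_{T ≥ 0} closure {φ t x : t ≥ T}` is nonempty and compact, the
limit `c = lim_{t→∞} V(φ t x)` exists, and `V ≡ c` on `ω(x)`. -/
theorem lyapunov_constant_on_omega_limit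
    {X : Type*} [MetricSpace X]
    (φ : ℝ → X → X)
    (hφcont : Continuous fun p : ℝ × X => φ p.1 p.2)
    (hφ0 : φ 0 = id)
    (hφadd : ∀ s t : ℝ, φ (s + t) = φ s ∘ φ t)
    (x : X)
    (hpre : IsCompact (closure ((fun t => φ t x) '' Set.Ici (0 : ℝ))))
    (V : X → ℝ) (hV : Continuous V)
    (hmono : AntitoneOn (fun t => V (φ t x)) (Set.Ici (0 : ℝ))) :
    (⋂ (T : ℝ) (_ : 0 ≤ T), closure ((fun t => φ t x) '' Set.Ici T)).Nonempty ∧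
    IsCompact (⋂ (T : ℝ) (_ : 0 ≤ T), closure ((fun t => φ t x) '' Set.Ici T)) ∧
    ∃ c : ℝ, Tendsto (fun t => V (φ t x)) atTop (𝓝 c) ∧
      ∀ y ∈ ⋂ (T : ℝ) (_ : 0 ≤ T), closure ((fun t => φ t x) '' Set.Ici T), V y = c :=
  lyapunov_constant_on_omega_limit_general φ x hpre V hV hmono
end

section
/- The ω-limit set of a dissipative mechanical system consists of motionless critical configurations: let U : ℝⁿ → ℝ be continuously differentiable with locally Lipschitz gradient ∇U, and let F : ℝⁿ × ℝⁿ → ℝⁿ be locally Lipschitz with ⟨F(p, v), v⟩ < 0 for all p ∈ ℝⁿ and all v ≠ 0, and F(p, 0) = 0 for all p. Let q : [0,∞) → ℝⁿ be twice differentiable with q̈(t) = −∇U(q(t)) + F(q(t), q̇(t)) for all t ≥ 0, and suppose the forward orbit {(q(t), q̇(t)) : t ≥ 0} is precompact in ℝⁿ × ℝⁿ. Then the ω-limit set of the curve t ↦ (q(t), q̇(t)) is contained in the set {(p, 0) : p ∈ ℝⁿ, ∇U(p) = 0}. -/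
/-! The energy `U(q) + ‖q̇‖²/2` changes at rate `⟪F(q, q̇), q̇⟫ ≤ 0` and is bounded below on the
precompact orbit, so it converges. Dissipation is uniformly strict on the compact part of the orbit
closure where `‖q̇‖ ≥ ε/2`, and `q̇` is Lipschitz, so each time `‖q̇‖ ≥ ε` the energy drops by a fixed
amount; hence `q̇ → 0`. At an ω-limit point `(p, 0)` the acceleration then stays close to `-∇U(p)`
on whole unit time windows, so `q̇(t + 1) - q̇(t) ≈ -∇U(p)`; the left side tends to `0`. -/

open RealInnerProductSpace Filter Topology Set

lemma le_add_mul_sub_of_hasDerivWithinAt_le {f f' : ℝ → ℝ} {a b C : ℝ} (hab : a ≤ b)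
    (hf : ∀ t ∈ Icc a b, HasDerivWithinAt f (f' t) (Ici a) t) (hC : ∀ t ∈ Ico a b, f' t ≤ C) :
    f b ≤ f a + C * (b - a) := by
  have hB (t : ℝ) : HasDerivAt (fun t => f a + C * (t - a)) C t := by
    simpa using ((hasDerivAt_id t).sub_const a).const_mul C |>.const_add (f a)
  exact image_le_of_deriv_right_le_deriv_boundary
    (fun t ht => (hf t ht).continuousWithinAt.mono Icc_subset_Ici_self)
    (fun t ht => (hf t (Ico_subset_Icc_self ht)).mono (Ici_subset_Ici.2 ht.1))
    (by simp) (fun t _ => (hB t).continuousAt.continuousWithinAt)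
    (fun t _ => (hB t).hasDerivWithinAt) hC ⟨hab, le_rfl⟩

lemma AntitoneOn.exists_tendsto_atTop {f : ℝ → ℝ} {a : ℝ} (hf : AntitoneOn f (Ici a))
    (hb : BddBelow (f '' Ici a)) : ∃ L, Tendsto f atTop (𝓝 L) := by
  have hg : Antitone fun t => f (max a t) := fun s t hst =>
    hf (le_max_left a s) (le_max_left a t) (max_le_max_left a hst)
  refine ⟨_, (tendsto_atTop_ciInf hg ?_).congr' ?_⟩
  · exact hb.mono (range_subset_iff.2 fun t => mem_image_of_mem f (le_max_left a t))
  · filter_upwards [eventually_ge_atTop a] with t ht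
    rw [max_eq_right ht]

lemma mapClusterPt_atTop_of_mem_iInter_closure {X : Type*} [TopologicalSpace X] {c : ℝ → X}
    {x : X} (hx : x ∈ ⋂ (T : ℝ) (_ : 0 ≤ T), closure (c '' Ici T)) :
    MapClusterPt x atTop c := by
  refine mapClusterPt_atTop_iff_forall_mem_closure.2 fun T => ?_
  exact closure_mono (image_mono (Ici_subset_Ici.2 (le_max_left T 0)))
    (mem_iInter₂.1 hx (max T 0) (le_max_right T 0))

section NormedSpace

variable {E : Type*} [NormedAddCommGroup E] [NormedSpace ℝ E]

theorem tendsto_atTop_zero_of_lyapunov {X : Type*} [TopologicalSpace X] {K : Set (X × E)}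
    (hK : IsCompact K) {H φ : X × E → ℝ} (hH : ContinuousOn H K) (hφ : ContinuousOn φ K)
    (hφ_nonpos : ∀ x ∈ K, φ x ≤ 0) (hφ_neg : ∀ x ∈ K, x.2 ≠ 0 → φ x < 0)
    {q : ℝ → X} {v a : ℝ → E} {M : ℝ} (horbit : ∀ t ∈ Ici 0, (q t, v t) ∈ K)
    (hv : ∀ t ∈ Ici 0, HasDerivWithinAt v (a t) (Ici 0) t) (ha : ∀ t ∈ Ici 0, ‖a t‖ ≤ M)
    (hH' : ∀ t ∈ Ici 0, HasDerivWithinAt (fun t => H (q t, v t)) (φ (q t, v t)) (Ici 0) t) :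
    Tendsto v atTop (𝓝 0) := by
  set En : ℝ → ℝ := fun t => H (q t, v t)
  have hdecay {s t C : ℝ} (hs : 0 ≤ s) (hst : s ≤ t) (hC : ∀ r ∈ Ico s t, φ (q r, v r) ≤ C) :
      En t ≤ En s + C * (t - s) :=
    le_add_mul_sub_of_hasDerivWithinAt_le hst
      (fun r hr => (hH' r (hs.trans hr.1)).mono (Ici_subset_Ici.2 hs)) hC
  obtain ⟨L, hL⟩ : ∃ L, Tendsto En atTop (𝓝 L) := by
    refine AntitoneOn.exists_tendsto_atTop (a := 0) (fun s hs t _ hst => ?_) ?_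
    · simpa using hdecay hs hst fun r hr => hφ_nonpos _ (horbit r (hs.trans hr.1))
    · refine (hK.bddBelow_image hH).mono ?_
      rintro _ ⟨t, ht, rfl⟩
      exact mem_image_of_mem H (horbit t ht)
  refine Metric.tendsto_nhds.2 fun ε hε => ?_
  by_contra hfar
  rw [not_eventually] at hfar
  -- away from `v = 0` the energy dissipates at a uniform positive rate `c`
  obtain ⟨c, hc, hφc⟩ : ∃ c, 0 < c ∧ ∀ x ∈ K ∩ {x | ε / 2 ≤ ‖x.2‖}, c ≤ -φ x :=
    (hK.inter_right (isClosed_le continuous_const continuous_snd.norm)).exists_forall_le'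
      (hφ.mono inter_subset_left).neg fun x hx =>
        neg_pos.2 (hφ_neg x hx.1 (norm_pos_iff.1 ((half_pos hε).trans_le hx.2)))
  -- and `v` stays away from `0` for a time `δ` after each large value, since `‖a‖ ≤ M`
  obtain ⟨δ, hδ, hMδ⟩ := exists_pos_mul_lt (half_pos hε) M
  have hM : 0 ≤ M := (norm_nonneg _).trans (ha 0 (mem_Ici.2 le_rfl))
  have hdrop {s : ℝ} (hs : 0 ≤ s) (hvs : ε ≤ ‖v s‖) : En (s + δ) ≤ En s + -c * δ := by
    have := hdecay (C := -c) hs (le_add_of_nonneg_right hδ.le) fun r hr => ?_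
    · simpa using this
    have hr0 : 0 ≤ r := hs.trans hr.1
    have hvr : ‖v r - v s‖ ≤ M * ‖r - s‖ :=
      (convex_Ici 0).norm_image_sub_le_of_norm_hasDerivWithin_le hv ha hs hr0
    have hrs : ‖r - s‖ ≤ δ := by
      rw [Real.norm_of_nonneg (sub_nonneg.2 hr.1)]
      linarith [hr.2]
    have : ε / 2 ≤ ‖v r‖ := by
      nlinarith [norm_sub_norm_le (v s) (v r), norm_sub_rev (v s) (v r)]
    linarith [hφc _ ⟨horbit r hr0, this⟩]
  have hclose : ∀ᶠ s in atTop, -c * δ < En (s + δ) - En s := by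
    have := (hL.comp (tendsto_atTop_add_const_right _ δ tendsto_id)).sub hL
    rw [sub_self] at this
    exact this.eventually (lt_mem_nhds (by nlinarith))
  obtain ⟨s, ⟨hs, hs0⟩, hvs⟩ := ((hclose.and (eventually_ge_atTop 0)).and_frequently hfar).exists
  rw [dist_zero_right, not_lt] at hvs
  linarith [hdrop hs0 hvs]

theorem norm_le_of_frequently_norm_deriv_sub_le {v a : ℝ → E} {g : E} {ε : ℝ}
    (hv : ∀ t ∈ Ici 0, HasDerivWithinAt v (a t) (Ici 0) t) (hlim : Tendsto v atTop (𝓝 0))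
    (hfreq : ∃ᶠ t in atTop, ∀ s ∈ Icc t (t + 1), ‖a s - g‖ ≤ ε) : ‖g‖ ≤ ε := by
  have hsum : Tendsto (fun t => ε + (‖v (t + 1)‖ + ‖v t‖)) atTop (𝓝 ε) := by
    simpa using tendsto_const_nhds.add
      ((hlim.comp (tendsto_atTop_add_const_right _ 1 tendsto_id)).norm.add hlim.norm)
  refine ge_of_tendsto_of_frequently hsum ((hfreq.and_eventually (eventually_ge_atTop 0)).mono ?_)
  rintro t ⟨ht, ht0⟩
  -- mean value inequality for `s ↦ v s - s • g`, whose derivative stays `ε`-close to `0`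
  have hmv : ‖(v (t + 1) - (t + 1) • g) - (v t - t • g)‖ ≤ ε * ‖(t + 1) - t‖ :=
    (convex_Icc t (t + 1)).norm_image_sub_le_of_norm_hasDerivWithin_le
      (f := fun s => v s - s • g) (f' := fun s => a s - g)
      (fun s hs => ((hv s (ht0.trans hs.1)).mono (Icc_subset_Ici_iff (by linarith) |>.2 ht0)).sub
        (by simpa using (hasDerivWithinAt_id s _).smul_const g))
      ht (left_mem_Icc.2 (by linarith)) (right_mem_Icc.2 (by linarith))
  have heq : (v (t + 1) - (t + 1) • g) - (v t - t • g) = v (t + 1) - v t - g := by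
    rw [add_smul, one_smul]; abel
  rw [heq, add_sub_cancel_left, norm_one, mul_one] at hmv
  calc ‖g‖ = ‖(v (t + 1) - v t) - (v (t + 1) - v t - g)‖ := by rw [sub_sub_cancel]
    _ ≤ ‖v (t + 1) - v t‖ + ‖v (t + 1) - v t - g‖ := norm_sub_le _ _
    _ ≤ ‖v (t + 1)‖ + ‖v t‖ + ε := add_le_add (norm_sub_le _ _) hmv
    _ = ε + (‖v (t + 1)‖ + ‖v t‖) := by ring

theorem eq_zero_of_mapClusterPt {G : E × E → E} {p : E} (hG : ContinuousAt G (p, 0))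
    {q v a : ℝ → E} (hq : ∀ t ∈ Ici 0, HasDerivWithinAt q (v t) (Ici 0) t)
    (hv : ∀ t ∈ Ici 0, HasDerivWithinAt v (a t) (Ici 0) t)
    (ha : ∀ t ∈ Ici 0, a t = G (q t, v t)) (hlim : Tendsto v atTop (𝓝 0))
    (hp : MapClusterPt (p, 0) atTop fun t => (q t, v t)) : G (p, 0) = 0 := by
  refine norm_le_zero_iff.1 (le_of_forall_pos_le_add fun ε hε => ?_)
  rw [zero_add]
  refine norm_le_of_frequently_norm_deriv_sub_le hv hlim ?_
  obtain ⟨η, hη, hGη⟩ := Metric.continuousAt_iff.1 hG ε hε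
  obtain ⟨T, hT⟩ := Metric.tendsto_atTop.1 hlim (η / 2) (half_pos hη)
  have hnear : ∃ᶠ t in atTop, (q t, v t) ∈ Metric.ball (p, 0) (η / 2) :=
    hp.frequently (Metric.ball_mem_nhds _ (half_pos hη))
  refine (hnear.and_eventually (eventually_ge_atTop (max T 0))).mono ?_
  rintro t ⟨htp, htT⟩ s hs
  have ht0 : 0 ≤ t := (le_max_right T 0).trans htT
  -- on `[t, t + 1]` the velocity is small, so the position stays near `p`
  have hvr : ∀ r ∈ Icc t (t + 1), ‖v r‖ ≤ η / 2 := fun r hr => by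
    simpa using (hT r ((le_max_left T 0).trans (htT.trans hr.1))).le
  have hqs : ‖q s - q t‖ ≤ η / 2 * ‖s - t‖ :=
    (convex_Icc t (t + 1)).norm_image_sub_le_of_norm_hasDerivWithin_le
      (fun r hr => (hq r (ht0.trans hr.1)).mono (Icc_subset_Ici_iff (by linarith) |>.2 ht0))
      hvr (left_mem_Icc.2 (by linarith)) hs
  rw [Real.norm_of_nonneg (sub_nonneg.2 hs.1)] at hqs
  have hsp : dist (q s, v s) (p, 0) < η := by
    rw [Metric.mem_ball, Prod.dist_eq, max_lt_iff] at htp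
    rw [Prod.dist_eq, max_lt_iff, dist_eq_norm, dist_zero_right]
    refine ⟨?_, by linarith [hvr s hs]⟩
    calc ‖q s - p‖ ≤ ‖q s - q t‖ + ‖q t - p‖ := norm_sub_le_norm_sub_add_norm_sub _ _ _
      _ < η / 2 + η / 2 := by rw [← dist_eq_norm (q t)]; nlinarith [hs.2, htp.1]
      _ = η := add_halves η
  rw [ha s (ht0.trans hs.1), ← dist_eq_norm]
  exact (hGη hsp).le

end NormedSpace

section InnerProductSpace

variable {E : Type*} [NormedAddCommGroup E] [InnerProductSpace ℝ E]

noncomputable def mechanicalEnergy (U : E → ℝ) (x : E × E) : ℝ := U x.1 + ‖x.2‖ ^ 2 / 2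

variable [CompleteSpace E]

theorem ContDiff.continuous_gradient {U : E → ℝ} (hU : ContDiff ℝ 1 U) :
    Continuous (gradient U) :=
  (InnerProductSpace.toDual ℝ E).symm.continuous.comp (hU.continuous_fderiv one_ne_zero)

theorem hasDerivWithinAt_mechanicalEnergy {U : E → ℝ} {q q' : ℝ → E} {f : E} {s : Set ℝ}
    {t : ℝ} (hU : DifferentiableAt ℝ U (q t)) (hq : HasDerivWithinAt q (q' t) s t)
    (hq' : HasDerivWithinAt q' (-gradient U (q t) + f) s t) :
    HasDerivWithinAt (fun t => mechanicalEnergy U (q t, q' t)) ⟪f, q' t⟫ s t := by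
  have h := (hU.hasFDerivAt.comp_hasDerivWithinAt t hq).add (hq'.norm_sq.div_const 2)
  refine h.congr_deriv ?_
  rw [← inner_gradient_left, inner_add_right, inner_neg_right, real_inner_comm f,
    real_inner_comm (gradient U (q t))]
  ring

end InnerProductSpace

theorem omega_limit_subset_critical_general
    {n : ℕ}
    (U : EuclideanSpace ℝ (Fin n) → ℝ)
    (hU : ContDiff ℝ 1 U)
    (F : EuclideanSpace ℝ (Fin n) → EuclideanSpace ℝ (Fin n) → EuclideanSpace ℝ (Fin n))
    (hFLip : LocallyLipschitz
      (fun p : EuclideanSpace ℝ (Fin n) × EuclideanSpace ℝ (Fin n) => F p.1 p.2))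
    (hFdiss : ∀ (p v : EuclideanSpace ℝ (Fin n)), v ≠ 0 → ⟪F p v, v⟫ < 0)
    (hF0 : ∀ p : EuclideanSpace ℝ (Fin n), F p 0 = 0)
    (q q' q'' : ℝ → EuclideanSpace ℝ (Fin n))
    (hq : ∀ t : ℝ, 0 ≤ t → HasDerivWithinAt q (q' t) (Set.Ici 0) t)
    (hq' : ∀ t : ℝ, 0 ≤ t → HasDerivWithinAt q' (q'' t) (Set.Ici 0) t)
    (heq : ∀ t : ℝ, 0 ≤ t → q'' t = -gradient U (q t) + F (q t) (q' t))
    (hpre : IsCompact (closure ((fun t => (q t, q' t)) '' Set.Ici (0 : ℝ)))) :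
    (⋂ (T : ℝ) (_ : 0 ≤ T), closure ((fun t => (q t, q' t)) '' Set.Ici T))
      ⊆ {p : EuclideanSpace ℝ (Fin n) × EuclideanSpace ℝ (Fin n) |
          gradient U p.1 = 0 ∧ p.2 = 0} := by
  have horbit (t : ℝ) (ht : t ∈ Ici 0) :
      (q t, q' t) ∈ closure ((fun t => (q t, q' t)) '' Ici 0) :=
    subset_closure ⟨t, ht, rfl⟩
  have hF : Continuous fun x : EuclideanSpace ℝ (Fin n) × _ => F x.1 x.2 := hFLip.continuous
  have hG : Continuous fun x : EuclideanSpace ℝ (Fin n) × _ => -gradient U x.1 + F x.1 x.2 :=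
    (hU.continuous_gradient.comp continuous_fst).neg.add hF
  obtain ⟨M, hM⟩ := hpre.exists_bound_of_continuousOn hG.continuousOn
  have hq'_lim : Tendsto q' atTop (𝓝 0) := by
    refine tendsto_atTop_zero_of_lyapunov hpre (H := mechanicalEnergy U)
      (φ := fun x => ⟪F x.1 x.2, x.2⟫) ?_ (hF.inner continuous_snd).continuousOn ?_
      (fun x _ hx => hFdiss _ _ hx) horbit hq' (fun t ht => heq t ht ▸ hM _ (horbit t ht))
      fun t ht => hasDerivWithinAt_mechanicalEnergy (hU.differentiable one_ne_zero _) (hq t ht)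
        (heq t ht ▸ hq' t ht)
    · exact ((hU.continuous.comp continuous_fst).add
        ((continuous_snd.norm.pow 2).div_const 2)).continuousOn
    · rintro ⟨p, v⟩ -
      rcases eq_or_ne v 0 with rfl | hv
      · simp
      · exact (hFdiss p v hv).le
  intro x hx
  have hcl := mapClusterPt_atTop_of_mem_iInter_closure hx
  obtain ⟨p, v⟩ := x
  obtain rfl : v = 0 :=
    eq_of_nhds_neBot ((hcl.tendsto_comp (continuous_snd.tendsto _)).clusterPt.mono hq'_lim)
  refine ⟨?_, rfl⟩
  simpa [hF0] using eq_zero_of_mapClusterPt hG.continuousAt hq hq' heq hq'_lim hcl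

/-- The ω-limit set of a dissipative mechanical system consists of motionless
critical configurations: if `U` is `C¹` with locally Lipschitz gradient, `F` is
locally Lipschitz with `⟨F(p,v), v⟩ < 0` for `v ≠ 0` and `F(p,0) = 0`, and
`q : [0,∞) → ℝⁿ` is a twice differentiable solution of `q̈ = −∇U(q) + F(q, q̇)`
with precompact forward orbit `{(q(t), q̇(t)) : t ≥ 0}`, then the ω-limit set of
`t ↦ (q(t), q̇(t))` is contained in `{(p, 0) : ∇U(p) = 0}`. -/
theorem omega_limit_subset_critical
    {n : ℕ}
    (U : EuclideanSpace ℝ (Fin n) → ℝ)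
    (hU : ContDiff ℝ 1 U) (hgradLip : LocallyLipschitz (gradient U))
    (F : EuclideanSpace ℝ (Fin n) → EuclideanSpace ℝ (Fin n) → EuclideanSpace ℝ (Fin n))
    (hFLip : LocallyLipschitz
      (fun p : EuclideanSpace ℝ (Fin n) × EuclideanSpace ℝ (Fin n) => F p.1 p.2))
    (hFdiss : ∀ (p v : EuclideanSpace ℝ (Fin n)), v ≠ 0 → ⟪F p v, v⟫ < 0)
    (hF0 : ∀ p : EuclideanSpace ℝ (Fin n), F p 0 = 0)
    (q q' q'' : ℝ → EuclideanSpace ℝ (Fin n))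
    (hq : ∀ t : ℝ, 0 ≤ t → HasDerivWithinAt q (q' t) (Set.Ici 0) t)
    (hq' : ∀ t : ℝ, 0 ≤ t → HasDerivWithinAt q' (q'' t) (Set.Ici 0) t)
    (heq : ∀ t : ℝ, 0 ≤ t → q'' t = -gradient U (q t) + F (q t) (q' t))
    (hpre : IsCompact (closure ((fun t => (q t, q' t)) '' Set.Ici (0 : ℝ)))) :
    (⋂ (T : ℝ) (_ : 0 ≤ T), closure ((fun t => (q t, q' t)) '' Set.Ici T))
      ⊆ {p : EuclideanSpace ℝ (Fin n) × EuclideanSpace ℝ (Fin n) |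
          gradient U p.1 = 0 ∧ p.2 = 0} :=
  omega_limit_subset_critical_general U hU F hFLip hFdiss hF0 q q' q'' hq hq' heq hpre
end
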